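/- Let w_{P/Q} ∈ W_P be the longest element that is a minimal-length representative in its coset w_{P/Q}W_Q. Then: (1) Inv(w_{P/Q}) = R_P^+ \ R_Q^+; (2) ℓ(w_{P/Q}) = ⟨−2ρ_P, γ^∨⟩; (3) ℓ(w_{P/Q} s_γ) = ℓ(w_{P/Q}) + ℓ(s_γ) = ⟨2(ρ − ρ_P), γ^∨⟩ − 1. -/

import Mathlib

/- A combinatorial framework for reduced crystallographic root systems with a
chosen system of simple roots, realized inside a real inner product space.
Weyl group elements are represented as plain functions `V → V` that are
compositions of simple reflections; `len` is the Coxeter length. -/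

noncomputable section
open Classical
open scoped RealInnerProductSpace

namespace Pp

variable {V : Type*} [NormedAddCommGroup V] [InnerProductSpace ℝ V]

/-- The coroot pairing `⟨x, α^∨⟩ = 2⟨x,α⟩/⟨α,α⟩`. -/
def cpr (x α : V) : ℝ := 2 * ⟪x, α⟫ / ⟪α, α⟫

/-- The reflection `s_α`, as a plain function. -/
def sref (α : V) : V → V := fun x => x - cpr x α • α

/-- `w` is a product of `n` reflections in simple roots taken from `Δ`. -/
def IsWord (Δ : Finset V) (w : V → V) (n : ℕ) : Prop :=
  ∃ l : List V, l.length = n ∧ (∀ α ∈ l, α ∈ Δ) ∧ w = (l.map sref).foldr (· ∘ ·) id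

/-- The Weyl group generated by the simple reflections, as a set of functions. -/
def Weyl (Δ : Finset V) : Set (V → V) := { w | ∃ n, IsWord Δ w n }

/-- Coxeter length with respect to the simple system `Δ`. -/
def len (Δ : Finset V) (w : V → V) : ℕ := sInf { n | IsWord Δ w n }

/-- The positive roots: roots which are nonnegative combinations of the
simple roots in `Δ`.  For a sub-system `Δ' ⊆ Δ`, `Pos Φ Δ'` is the set of
positive roots supported on `Δ'`. -/
def Pos (Φ Δ : Finset V) : Finset V :=
  Φ.filter fun β => ∃ c : V → ℝ, (∀ α ∈ Δ, 0 ≤ c α) ∧ β = ∑ α ∈ Δ, c α • α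

/-- Half sum of positive roots. -/
def rho (Φ Δ : Finset V) : V := (2:ℝ)⁻¹ • ∑ β ∈ Pos Φ Δ, β

/-- The axioms of a reduced crystallographic root system `Φ` with simple
system `Δ`. -/
structure IsRS (Φ Δ : Finset V) : Prop where
  zero_not_mem : (0:V) ∉ Φ
  neg_mem : ∀ α ∈ Φ, -α ∈ Φ
  reduced : ∀ α ∈ Φ, ∀ t : ℝ, t • α ∈ (Φ : Set V) → t = 1 ∨ t = -1
  cryst : ∀ α ∈ Φ, ∀ β ∈ Φ, ∃ k : ℤ, (k : ℝ) = cpr α β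
  refl_mem : ∀ α ∈ Φ, ∀ β ∈ Φ, sref α β ∈ Φ
  simple_mem : ∀ α ∈ Δ, α ∈ Φ
  simple_indep : LinearIndependent ℝ (fun α : Δ => (α : V))
  pos_or_neg : ∀ β ∈ Φ, β ∈ Pos Φ Δ ∨ -β ∈ Pos Φ Δ

/-- `β` is a quantum root: `ℓ(s_β) = ⟨2ρ, β^∨⟩ - 1`. -/
def IsQuantum (Φ Δ : Finset V) (β : V) : Prop :=
  (len Δ (sref β) : ℝ) = cpr ((2:ℝ) • rho Φ Δ) β - 1

/-- Minimal length coset representatives `W^P`: elements of `W` mapping the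
positive roots of the parabolic (`Pos Φ ΔP`) to positive roots. -/
def MinRep (Φ Δ ΔP : Finset V) (w : V → V) : Prop :=
  w ∈ Weyl Δ ∧ ∀ β ∈ Pos Φ ΔP, w β ∈ Pos Φ Δ

/-- `θ` is the highest root. -/
def IsHighest (Φ Δ : Finset V) (θ : V) : Prop :=
  θ ∈ Pos Φ Δ ∧ ∀ β ∈ Φ, ∃ c : V → ℝ, (∀ α ∈ Δ, 0 ≤ c α) ∧ θ - β = ∑ α ∈ Δ, c α • α

/-- All roots have the same length. -/
def SimplyLaced (Φ : Finset V) : Prop := ∀ α ∈ Φ, ∀ β ∈ Φ, ⟪α, α⟫ = ⟪β, β⟫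

/-- The node `ι ∈ Δ` is minuscule: the coefficient of `α_ι^∨` in every coroot
is at most `1`. -/
def Minuscule (Φ Δ : Finset V) (ι : V) : Prop :=
  ∀ β ∈ Φ, ∀ c : V → ℝ,
    (2 / ⟪β, β⟫) • β = ∑ α ∈ Δ, c α • ((2 / ⟪α, α⟫) • α) → c ι ≤ 1

/-- The node `ι ∈ Δ` is cominuscule: the coefficient of `α_ι` in every
positive root is at most `1`. -/
def Cominuscule (Φ Δ : Finset V) (ι : V) : Prop :=
  ∀ β ∈ Pos Φ Δ, ∀ c : V → ℝ,
    ((∀ α ∈ Δ, 0 ≤ c α) ∧ β = ∑ α ∈ Δ, c α • α) → c ι ≤ 1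

/-- `(Φ, Δ)` is the root system of type `B_n` in the standard coordinates
given by the orthonormal family `e`. -/
def TypeBData (Φ Δ : Finset V) (n : ℕ) (e : Fin n → V) : Prop :=
  Orthonormal ℝ e ∧
  (Φ : Set V) =
    ({v | ∃ i j : Fin n, i ≠ j ∧ (v = e i - e j ∨ v = e i + e j ∨ v = -(e i + e j))} ∪
     {v | ∃ i : Fin n, v = e i ∨ v = -(e i)}) ∧
  (Δ : Set V) =
    ({v | ∃ i : Fin n, ∃ h : (i : ℕ) + 1 < n, v = e i - e ⟨(i : ℕ) + 1, h⟩} ∪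
     {v | ∃ h : 0 < n, v = e ⟨n - 1, by omega⟩})

/-- `(Φ, Δ)` is the root system of type `C_n` in the standard coordinates
given by the orthonormal family `e`. -/
def TypeCData (Φ Δ : Finset V) (n : ℕ) (e : Fin n → V) : Prop :=
  Orthonormal ℝ e ∧
  (Φ : Set V) =
    ({v | ∃ i j : Fin n, i ≠ j ∧ (v = e i - e j ∨ v = e i + e j ∨ v = -(e i + e j))} ∪
     {v | ∃ i : Fin n, v = (2:ℝ) • e i ∨ v = -((2:ℝ) • e i)}) ∧
  (Δ : Set V) =
    ({v | ∃ i : Fin n, ∃ h : (i : ℕ) + 1 < n, v = e i - e ⟨(i : ℕ) + 1, h⟩} ∪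
     {v | ∃ h : 0 < n, v = (2:ℝ) • e ⟨n - 1, by omega⟩})

/-- `γ` is the distinguished (quantum) root attached to the minuscule node
`ι`: `γ = α_ι` in the simply-laced case, `γ = α_{n-1} + 2α_n = e_{n-1} + e_n`
in type `B_n` (with `ι = n`), and `γ = θ = 2e_1` in type `C_n` (with `ι = 1`). -/
def DistinguishedGamma (Φ Δ : Finset V) (ι γ : V) : Prop :=
  (SimplyLaced Φ ∧ γ = ι) ∨
  (∃ n : ℕ, ∃ _h : 2 ≤ n, ∃ e : Fin n → V, TypeBData Φ Δ n e ∧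
    ι = e ⟨n - 1, by omega⟩ ∧ γ = e ⟨n - 2, by omega⟩ + e ⟨n - 1, by omega⟩) ∨
  (∃ n : ℕ, ∃ _h : 2 ≤ n, ∃ e : Fin n → V, TypeCData Φ Δ n e ∧
    ι = e ⟨0, by omega⟩ - e ⟨1, by omega⟩ ∧ γ = (2:ℝ) • e ⟨0, by omega⟩)

end Pp

/-!
Write `ΔP = Δ ∖ {ι}` and `ΔQ ⊆ ΔP` for the simple roots orthogonal to `γ`. In each case of the
definition of the distinguished root, `γ` is a long positive root with `⟨α_j, γ^∨⟩ ≤ 0` for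
`j ≠ ι`. Integrality and the length bound then force `⟨β, γ^∨⟩ = -1` for `β ∈ R_P^+ ∖ R_Q^+`,
while `⟨β, γ^∨⟩ = 0` on `R_Q^+`.

Lengths are numbers of inversions. An element of `W_P` that is positive on `R_Q^+` has all its
inversions in `R_P^+ ∖ R_Q^+`, and the product `w_P w_Q` of longest elements has exactly these
inversions; hence so does the longest such element, which is (1), and summing `⟨β, γ^∨⟩` over
`R_P^+` gives (2). The inversions of `s_γ` pair positively with `γ^∨` and those of `w_{P/Q}`
negatively, so `Inv(w_{P/Q} s_γ)` is the disjoint union of `Inv(s_γ)` and `s_γ Inv(w_{P/Q})`.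
Finally, for a long root every inversion of `s_γ` other than `γ` pairs to exactly `1` with
`γ^∨`, while the remaining positive roots are paired off by `s_γ` with opposite pairings; so
`ℓ(s_γ) = ⟨2ρ, γ^∨⟩ - 1`, and (3) follows.
-/

namespace Pp

variable {V : Type*} [NormedAddCommGroup V] [InnerProductSpace ℝ V]

def corootForm (α : V) : V →ₗ[ℝ] ℝ := (2 / ⟪α, α⟫) • innerₛₗ ℝ α

lemma corootForm_apply (α x : V) : corootForm α x = cpr x α := by
  simp only [corootForm, cpr, LinearMap.smul_apply, innerₛₗ_apply_apply, smul_eq_mul,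
    real_inner_comm]
  ring

lemma cpr_add (x y α : V) : cpr (x + y) α = cpr x α + cpr y α := by
  simp only [← corootForm_apply, map_add]

lemma cpr_smul (r : ℝ) (x α : V) : cpr (r • x) α = r * cpr x α := by
  simp only [← corootForm_apply, map_smul, smul_eq_mul]

lemma cpr_neg (x α : V) : cpr (-x) α = -cpr x α := by
  simp only [← corootForm_apply, map_neg]

lemma cpr_sub (x y α : V) : cpr (x - y) α = cpr x α - cpr y α := by
  simp only [← corootForm_apply, map_sub]

lemma cpr_sum {κ : Type*} (s : Finset κ) (f : κ → V) (α : V) :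
    cpr (∑ i ∈ s, f i) α = ∑ i ∈ s, cpr (f i) α := by
  simp only [← corootForm_apply, map_sum]

lemma cpr_self {α : V} (hα : α ≠ 0) : cpr α α = 2 := by
  rw [cpr, mul_div_assoc, div_self (inner_self_ne_zero.mpr hα), mul_one]

lemma cpr_le_zero_of_inner_nonpos {x α : V} (h : ⟪x, α⟫ ≤ 0) : cpr x α ≤ 0 :=
  div_nonpos_of_nonpos_of_nonneg (by linarith) real_inner_self_nonneg

lemma sref_apply (α x : V) : sref α x = x - cpr x α • α := rfl

lemma sref_self (α : V) : sref α α = -α := by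
  rcases eq_or_ne α 0 with rfl | hα
  · simp [sref_apply, cpr]
  · rw [sref_apply, cpr_self hα]; module

lemma sref_sref (α x : V) : sref α (sref α x) = x := by
  rcases eq_or_ne α 0 with rfl | hα
  · simp [sref_apply, cpr]
  · rw [sref_apply, sref_apply, cpr_sub, cpr_smul, cpr_self hα]; module

lemma sref_neg (α x : V) : sref α (-x) = -sref α x := by
  rw [sref_apply, sref_apply, cpr_neg, neg_smul, neg_sub_neg, neg_sub]

lemma sref_involutive (α : V) : Function.Involutive (sref α) := sref_sref α

lemma inner_sref_sref (α x y : V) : ⟪sref α x, sref α y⟫ = ⟪x, y⟫ := by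
  rcases eq_or_ne α 0 with rfl | hα
  · simp [sref_apply, cpr]
  have hαα : ⟪α, α⟫ ≠ 0 := inner_self_ne_zero.mpr hα
  simp only [sref_apply, cpr, inner_sub_left, inner_sub_right, real_inner_smul_left,
    real_inner_smul_right, real_inner_comm α]
  field_simp
  ring

def srefIso (α : V) : V ≃ₗᵢ[ℝ] V where
  toFun := sref α
  invFun := sref α
  map_add' x y := by simp only [sref_apply, cpr_add, add_smul]; abel
  map_smul' r x := by simp only [sref_apply, cpr_smul, smul_sub, mul_smul, RingHom.id_apply]
  left_inv := sref_sref α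
  right_inv := sref_sref α
  norm_map' x := by
    simp only [LinearEquiv.coe_mk, LinearMap.coe_mk, AddHom.coe_mk, norm_eq_sqrt_real_inner,
      inner_sref_sref]

@[simp] lemma coe_srefIso (α : V) : ⇑(srefIso α) = sref α := rfl

section Words

def word (l : List V) : V ≃ₗᵢ[ℝ] V := (l.map srefIso).prod

lemma word_nil : word ([] : List V) = 1 := rfl

lemma word_cons (a : V) (l : List V) : word (a :: l) = srefIso a * word l := by
  simp [word]

lemma word_append (l₁ l₂ : List V) : word (l₁ ++ l₂) = word l₁ * word l₂ := by
  simp [word]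

lemma coe_word (l : List V) : ⇑(word l) = (l.map sref).foldr (· ∘ ·) id := by
  induction l with
  | nil => rfl
  | cons a l ih => rw [word_cons, LinearIsometryEquiv.coe_mul, ih]; rfl

lemma coe_mul_srefIso (e : V ≃ₗᵢ[ℝ] V) (α : V) : ⇑(e * srefIso α) = e ∘ sref α := rfl

lemma srefIso_mul_self (α : V) : srefIso α * srefIso α = 1 := by
  ext x
  simp [sref_sref]

lemma srefIso_conj (e : V ≃ₗᵢ[ℝ] V) (α : V) : e * srefIso α = srefIso (e α) * e := by
  ext x
  simp only [LinearIsometryEquiv.coe_mul, Function.comp_apply, coe_srefIso, sref_apply,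
    map_sub, map_smul, cpr, LinearIsometryEquiv.inner_map_map]

variable {Δ : Finset V}

lemma isWord_iff {w : V → V} {n : ℕ} :
    IsWord Δ w n ↔ ∃ l : List V, l.length = n ∧ (∀ a ∈ l, a ∈ Δ) ∧ w = word l := by
  simp only [IsWord, coe_word]

lemma mem_Weyl_iff {w : V → V} : w ∈ Weyl Δ ↔ ∃ l : List V, (∀ a ∈ l, a ∈ Δ) ∧ w = word l := by
  simp only [Weyl, Set.mem_ofPred_eq, isWord_iff]
  exact ⟨fun ⟨_, l, _, hl, hw⟩ => ⟨l, hl, hw⟩, fun ⟨l, hl, hw⟩ => ⟨_, l, rfl, hl, hw⟩⟩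

lemma word_mem_Weyl {l : List V} (hl : ∀ a ∈ l, a ∈ Δ) : ⇑(word l) ∈ Weyl Δ :=
  mem_Weyl_iff.mpr ⟨l, hl, rfl⟩

lemma comp_mem_Weyl {w v : V → V} (hw : w ∈ Weyl Δ) (hv : v ∈ Weyl Δ) : w ∘ v ∈ Weyl Δ := by
  obtain ⟨l, hl, rfl⟩ := mem_Weyl_iff.mp hw
  obtain ⟨m, hm, rfl⟩ := mem_Weyl_iff.mp hv
  rw [← LinearIsometryEquiv.coe_mul, ← word_append]
  exact word_mem_Weyl fun a ha => (List.mem_append.mp ha).elim (hl a) (hm a)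

lemma sref_mem_Weyl_of_mem {α : V} (hα : α ∈ Δ) : sref α ∈ Weyl Δ :=
  mem_Weyl_iff.mpr ⟨[α], by simpa using hα, by simp [word]⟩

lemma Weyl_mono {Δ' : Finset V} (h : Δ' ⊆ Δ) : Weyl Δ' ⊆ Weyl Δ := fun _ hw =>
  let ⟨l, hl, hw⟩ := mem_Weyl_iff.mp hw
  mem_Weyl_iff.mpr ⟨l, fun a ha => h (hl a ha), hw⟩

lemma len_le {w : V → V} {n : ℕ} (hw : IsWord Δ w n) : len Δ w ≤ n :=
  Nat.sInf_le hw

lemma exists_reduced_word {w : V → V} (hw : w ∈ Weyl Δ) :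
    ∃ l : List V, (∀ a ∈ l, a ∈ Δ) ∧ w = word l ∧ l.length = len Δ w := by
  obtain ⟨l, hlen, hl, rfl⟩ := isWord_iff.mp (Nat.sInf_mem hw)
  exact ⟨l, hl, rfl, hlen⟩

lemma len_comp_sref_le {w : V → V} (hw : w ∈ Weyl Δ) {α : V} (hα : α ∈ Δ) :
    len Δ (w ∘ sref α) ≤ len Δ w + 1 := by
  obtain ⟨l, hl, rfl, hlen⟩ := exists_reduced_word hw
  refine len_le (isWord_iff.mpr ⟨l ++ [α], by simp [hlen], ?_, ?_⟩)
  · simpa [or_imp, forall_and] using ⟨hl, hα⟩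
  · rw [word_append, LinearIsometryEquiv.coe_mul]; simp [word]

end Words

section PositiveRoots

lemma mem_hull_finset {s : Finset V} {x : V} :
    x ∈ PointedCone.hull ℝ (s : Set V) ↔
      ∃ c : V → ℝ, (∀ α ∈ s, 0 ≤ c α) ∧ x = ∑ α ∈ s, c α • α := by
  rw [Submodule.mem_span_finset]
  constructor
  · rintro ⟨f, -, rfl⟩
    exact ⟨fun a => f a, fun a _ => (f a).2, by simp only [Nonneg.coe_smul]⟩
  · rintro ⟨c, hc, rfl⟩
    refine ⟨fun a => if ha : a ∈ s then ⟨c a, hc a ha⟩ else 0, fun a ha => ?_, ?_⟩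
    · by_contra has
      exact ha (dif_neg has)
    · refine Finset.sum_congr rfl fun a ha => ?_
      simp only [dif_pos ha, Nonneg.mk_smul]

lemma mem_Pos {Φ Δ : Finset V} {β : V} :
    β ∈ Pos Φ Δ ↔ β ∈ Φ ∧ β ∈ PointedCone.hull ℝ (Δ : Set V) := by
  rw [Pos, Finset.mem_filter, mem_hull_finset]

lemma Pos_subset (Φ Δ : Finset V) : Pos Φ Δ ⊆ Φ := Finset.filter_subset _ _

lemma Pos_mono (Φ : Finset V) {Δ₁ Δ₂ : Finset V} (h : Δ₁ ⊆ Δ₂) : Pos Φ Δ₁ ⊆ Pos Φ Δ₂ :=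
  fun _ hβ => mem_Pos.mpr ⟨(mem_Pos.mp hβ).1,
    Submodule.span_mono (Finset.coe_subset.mpr h) (mem_Pos.mp hβ).2⟩

end PositiveRoots

section RootSystem

variable {Φ Δ : Finset V}

lemma IsRS.ne_zero (hR : IsRS Φ Δ) {β : V} (hβ : β ∈ Φ) : β ≠ 0 :=
  fun h0 => hR.zero_not_mem (h0 ▸ hβ)

lemma IsRS.coeff_eq_of_sum_eq (hR : IsRS Φ Δ) {c d : V → ℝ}
    (hcd : ∑ α ∈ Δ, c α • α = ∑ α ∈ Δ, d α • α) : ∀ α ∈ Δ, c α = d α := by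
  intro α hα
  have hsum : ∑ a : Δ, (c a - d a) • (a : V) = 0 := by
    simp only [sub_smul, Finset.sum_sub_distrib, Finset.univ_eq_attach]
    rw [Finset.sum_attach Δ (fun x => c x • x), Finset.sum_attach Δ (fun x => d x • x), hcd,
      sub_self]
  exact sub_eq_zero.mp (Fintype.linearIndependent_iff.mp hR.simple_indep _ hsum ⟨α, hα⟩)

lemma IsRS.neg_notMem_Pos (hR : IsRS Φ Δ) {β : V} (hβ : β ∈ Pos Φ Δ) : -β ∉ Pos Φ Δ := by
  intro hnβ
  obtain ⟨hβΦ, c, hc0, hc⟩ := Finset.mem_filter.mp hβ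
  obtain ⟨-, d, hd0, hd⟩ := Finset.mem_filter.mp hnβ
  have hzero := hR.coeff_eq_of_sum_eq (c := c + d) (d := 0) <| by
    simp only [Pi.add_apply, add_smul, Finset.sum_add_distrib, ← hc, ← hd, Pi.zero_apply,
      zero_smul, Finset.sum_const_zero, add_neg_cancel]
  refine hR.ne_zero hβΦ (hc.trans (Finset.sum_eq_zero fun α hα => ?_))
  have := hzero α hα
  simp only [Pi.add_apply, Pi.zero_apply] at this
  rw [show c α = 0 by linarith [hc0 α hα, hd0 α hα], zero_smul]

lemma IsRS.neg_mem_Pos_iff (hR : IsRS Φ Δ) {β : V} (hβ : β ∈ Φ) :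
    -β ∈ Pos Φ Δ ↔ β ∉ Pos Φ Δ := by
  refine ⟨fun hn hp => hR.neg_notMem_Pos hp hn, fun hp => ?_⟩
  exact (hR.pos_or_neg β hβ).resolve_left hp

lemma IsRS.mem_Pos_iff_of_subset (hR : IsRS Φ Δ) {Δ' : Finset V} (hsub : Δ' ⊆ Δ) {β : V} :
    β ∈ Pos Φ Δ' ↔ β ∈ Pos Φ Δ ∧ β ∈ Submodule.span ℝ (Δ' : Set V) := by
  refine ⟨fun hβ => ⟨Pos_mono Φ hsub hβ,
    PointedCone.hull_le_span ℝ _ (mem_Pos.mp hβ).2⟩, fun ⟨hβ, hspan⟩ => ?_⟩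
  obtain ⟨hβΦ, c, hc0, hc⟩ := Finset.mem_filter.mp hβ
  obtain ⟨f, hf, hfβ⟩ := Submodule.mem_span_finset.mp hspan
  have hf' : ∑ α ∈ Δ, f α • α = ∑ α ∈ Δ', f α • α :=
    (Finset.sum_subset hsub fun α _ hα => by
      rw [Function.notMem_support.mp fun h => hα (hf h), zero_smul]).symm
  have hcf := hR.coeff_eq_of_sum_eq (hc.symm.trans (hf'.trans hfβ).symm)
  refine Finset.mem_filter.mpr ⟨hβΦ, c, fun α hα => hc0 α (hsub hα), ?_⟩
  rw [hc, ← Finset.sum_subset hsub fun α hα hα' => ?_]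
  rw [hcf α hα, Function.notMem_support.mp fun h => hα' (hf h), zero_smul]

lemma IsRS.simple_mem_Pos (hR : IsRS Φ Δ) {α : V} (hα : α ∈ Δ) : α ∈ Pos Φ Δ :=
  mem_Pos.mpr ⟨hR.simple_mem α hα, PointedCone.subset_hull hα⟩

lemma IsRS.sref_mem_Pos (hR : IsRS Φ Δ) {α β : V} (hα : α ∈ Δ) (hβ : β ∈ Pos Φ Δ)
    (hne : β ≠ α) : sref α β ∈ Pos Φ Δ := by
  obtain ⟨hβΦ, c, hc0, hc⟩ := Finset.mem_filter.mp hβ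
  have hαΦ := hR.simple_mem α hα
  obtain ⟨α', hα', hα'α, hcα'⟩ : ∃ α' ∈ Δ, α' ≠ α ∧ 0 < c α' := by
    by_contra! hno
    have hβα : β = c α • α := by
      rw [hc, Finset.sum_eq_single_of_mem α hα fun b hb hbα => by
        rw [le_antisymm (hno b hb hbα) (hc0 b hb), zero_smul]]
    rcases hR.reduced α hαΦ (c α) (hβα ▸ hβΦ) with h1 | h1
    · exact hne (by rw [hβα, h1, one_smul])
    · linarith [hc0 α hα]
  refine (hR.pos_or_neg _ (hR.refl_mem α hαΦ β hβΦ)).resolve_right fun hneg => ?_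
  obtain ⟨-, d, hd0, hd⟩ := Finset.mem_filter.mp hneg
  -- `-s_α β = -β + ⟨β, α^∨⟩ α` and the coefficient of `α'` in it is `-c α' < 0`.
  have hcoeff := hR.coeff_eq_of_sum_eq (c := d)
    (d := fun v => -c v + if v = α then cpr β α else 0) <| by
    simp only [add_smul, neg_smul, ite_smul, zero_smul, Finset.sum_add_distrib,
      Finset.sum_neg_distrib, Finset.sum_ite_eq', if_pos hα, ← hc, ← hd, sref_apply]
    abel
  have := hcoeff α' hα'
  rw [if_neg hα'α] at this
  linarith [hd0 α' hα']

lemma IsRS.word_mem (hR : IsRS Φ Δ) {l : List V} (hl : ∀ a ∈ l, a ∈ Δ) {β : V}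
    (hβ : β ∈ Φ) : word l β ∈ Φ := by
  induction l with
  | nil => exact hβ
  | cons a t ih =>
    rw [word_cons, LinearIsometryEquiv.coe_mul, Function.comp_apply, coe_srefIso]
    exact hR.refl_mem a (hR.simple_mem a (hl a List.mem_cons_self)) _
      (ih fun x hx => hl x (List.mem_cons_of_mem a hx))

lemma word_sub_self_mem_span {Δ' : Finset V} {l : List V} (hl : ∀ a ∈ l, a ∈ Δ') (x : V) :
    word l x - x ∈ Submodule.span ℝ (Δ' : Set V) := by
  induction l with
  | nil => simp [word_nil]
  | cons a t ih =>
    have ha : a ∈ Submodule.span ℝ (Δ' : Set V) :=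
      Submodule.subset_span (Finset.mem_coe.mpr (hl a List.mem_cons_self))
    have hstep : word (a :: t) x - x = (word t x - x) - cpr (word t x) a • a := by
      rw [word_cons, LinearIsometryEquiv.coe_mul, Function.comp_apply, coe_srefIso, sref_apply]
      abel
    rw [hstep]
    exact sub_mem (ih fun y hy => hl y (List.mem_cons_of_mem a hy)) (Submodule.smul_mem _ _ ha)

lemma IsRS.word_mem_Pos_of_notMem_span (hR : IsRS Φ Δ) {Δ' : Finset V} (hsub : Δ' ⊆ Δ)
    {l : List V} (hl : ∀ a ∈ l, a ∈ Δ') {β : V} (hβ : β ∈ Pos Φ Δ)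
    (hs : β ∉ Submodule.span ℝ (Δ' : Set V)) : word l β ∈ Pos Φ Δ := by
  induction l with
  | nil => exact hβ
  | cons a t ih =>
    have ht : ∀ x ∈ t, x ∈ Δ' := fun x hx => hl x (List.mem_cons_of_mem a hx)
    have ha := hl a List.mem_cons_self
    have hne : word t β ≠ a := fun h => hs <| by
      simpa [h] using sub_mem (Submodule.subset_span (Finset.mem_coe.mpr ha))
        (word_sub_self_mem_span ht β)
    rw [word_cons, LinearIsometryEquiv.coe_mul, Function.comp_apply, coe_srefIso]
    exact hR.sref_mem_Pos (hsub ha) (ih ht) hne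

end RootSystem

section Length

variable {Φ Δ : Finset V}

def inversions (Φ Δ : Finset V) (w : V → V) : Finset V :=
  (Pos Φ Δ).filter fun β => w β ∉ Pos Φ Δ

lemma mem_inversions {w : V → V} {β : V} :
    β ∈ inversions Φ Δ w ↔ β ∈ Pos Φ Δ ∧ w β ∉ Pos Φ Δ :=
  Finset.mem_filter

lemma apply_mem_Pos_iff_notMem_inversions {w : V → V} {β : V} (hβ : β ∈ Pos Φ Δ) :
    w β ∈ Pos Φ Δ ↔ β ∉ inversions Φ Δ w := by
  rw [mem_inversions, not_and, not_not]
  exact ⟨fun h _ => h, fun h => h hβ⟩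

lemma inversions_subset (Φ Δ : Finset V) (w : V → V) : inversions Φ Δ w ⊆ Pos Φ Δ :=
  Finset.filter_subset _ _

lemma IsRS.inversions_comp_sref (hR : IsRS Φ Δ) {α : V} (hα : α ∈ Δ) (e : V ≃ₗᵢ[ℝ] V)
    (he : e α ∈ Pos Φ Δ) :
    inversions Φ Δ (e ∘ sref α) = insert α ((inversions Φ Δ e).image (sref α)) := by
  ext β
  simp only [Finset.mem_insert, Finset.mem_image, mem_inversions, Function.comp_apply]
  constructor
  · rintro ⟨hβ, hneg⟩
    by_cases hβα : β = α
    · exact Or.inl hβα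
    · exact Or.inr ⟨sref α β, ⟨hR.sref_mem_Pos hα hβ hβα, hneg⟩, sref_sref α β⟩
  · rintro (rfl | ⟨β', ⟨hβ', hneg⟩, rfl⟩)
    · refine ⟨hR.simple_mem_Pos hα, ?_⟩
      rw [sref_self, map_neg]
      exact hR.neg_notMem_Pos he
    · have hne : β' ≠ α := fun h => hneg (h ▸ he)
      exact ⟨hR.sref_mem_Pos hα hβ' hne, by rwa [sref_sref]⟩

lemma IsRS.card_inversions_comp_sref (hR : IsRS Φ Δ) {α : V} (hα : α ∈ Δ) (e : V ≃ₗᵢ[ℝ] V)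
    (he : e α ∈ Pos Φ Δ) :
    (inversions Φ Δ (e ∘ sref α)).card = (inversions Φ Δ e).card + 1 := by
  have hα_notMem : α ∉ (inversions Φ Δ e).image (sref α) := by
    intro h
    obtain ⟨β, hβ, hβα⟩ := Finset.mem_image.mp h
    have : β = -α := by rw [← sref_sref α β, hβα, sref_self]
    exact hR.neg_notMem_Pos (hR.simple_mem_Pos hα) (this ▸ (mem_inversions.mp hβ).1)
  rw [hR.inversions_comp_sref hα e he, Finset.card_insert_of_notMem hα_notMem,
    Finset.card_image_of_injective _ (sref_involutive α).injective]

lemma IsRS.exchange (hR : IsRS Φ Δ) {l : List V} (hl : ∀ a ∈ l, a ∈ Δ)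
    {α : V} (hα : α ∈ Δ) (hneg : word l α ∉ Pos Φ Δ) :
    ∃ l' : List V, (∀ a ∈ l', a ∈ Δ) ∧ l'.length + 1 = l.length ∧
      word l' = word l * srefIso α := by
  induction l with
  | nil => exact (hneg (hR.simple_mem_Pos hα)).elim
  | cons a t ih =>
    have ha : a ∈ Δ := hl a List.mem_cons_self
    have ht : ∀ x ∈ t, x ∈ Δ := fun x hx => hl x (List.mem_cons_of_mem a hx)
    by_cases hpos : word t α ∈ Pos Φ Δ
    · have hta : word t α = a := by
        by_contra hne
        refine hneg ?_
        rw [word_cons, LinearIsometryEquiv.coe_mul, Function.comp_apply, coe_srefIso]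
        exact hR.sref_mem_Pos ha hpos hne
      refine ⟨t, ht, rfl, ?_⟩
      rw [word_cons, mul_assoc, srefIso_conj, hta, ← mul_assoc, srefIso_mul_self, one_mul]
    · obtain ⟨t', ht', hlen, heq⟩ := ih ht hpos
      refine ⟨a :: t', ?_, by simp [← hlen], by rw [word_cons, word_cons, heq, mul_assoc]⟩
      simpa [ha] using ht'

lemma IsRS.card_inversions_word_of_reduced (hR : IsRS Φ Δ) {l : List V}
    (hl : ∀ a ∈ l, a ∈ Δ) (hred : l.length = len Δ (word l)) :
    (inversions Φ Δ (word l)).card = l.length := by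
  induction l using List.reverseRecOn with
  | nil =>
    simp only [word_nil, List.length_nil, Finset.card_eq_zero]
    exact Finset.filter_false_of_mem fun β hβ h => h hβ
  | append_singleton t α ih =>
    have ht : ∀ a ∈ t, a ∈ Δ := fun a ha => hl a (List.mem_append_left _ ha)
    have hα : α ∈ Δ := hl α (by simp)
    have hword : word (t ++ [α]) = word t * srefIso α := by simp [word]
    have hlen : len Δ (word t) = t.length := by
      have := len_comp_sref_le (word_mem_Weyl ht) hα
      rw [← coe_mul_srefIso, ← hword, ← hred] at this
      have := len_le (isWord_iff.mpr ⟨t, rfl, ht, rfl⟩)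
      simp only [List.length_append, List.length_singleton] at *
      omega
    have hpos : word t α ∈ Pos Φ Δ := by
      by_contra hneg
      obtain ⟨l', hl', hlen', heq⟩ := hR.exchange ht hα hneg
      have := len_le (w := word (t ++ [α])) (isWord_iff.mpr ⟨l', rfl, hl', by rw [heq, hword]⟩)
      simp only [List.length_append, List.length_singleton] at hred
      omega
    rw [hword, coe_mul_srefIso, hR.card_inversions_comp_sref hα _ hpos,
      ih ht hlen.symm, List.length_append, List.length_singleton]

lemma IsRS.neg_apply_mem_Pos_iff (hR : IsRS Φ Δ) {w : V → V}
    (hw : w ∈ Weyl Δ) {β : V} (hβ : β ∈ Pos Φ Δ) :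
    -w β ∈ Pos Φ Δ ↔ β ∈ inversions Φ Δ w := by
  obtain ⟨l, hl, rfl⟩ := mem_Weyl_iff.mp hw
  rw [hR.neg_mem_Pos_iff (hR.word_mem hl (Pos_subset Φ Δ hβ)),
    apply_mem_Pos_iff_notMem_inversions hβ, not_not]

lemma IsRS.len_eq_card_inversions (hR : IsRS Φ Δ) {w : V → V} (hw : w ∈ Weyl Δ) :
    len Δ w = (inversions Φ Δ w).card := by
  obtain ⟨l, hl, rfl, hlen⟩ := exists_reduced_word hw
  rw [hR.card_inversions_word_of_reduced hl hlen, hlen]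

end Length

section Parabolic

variable {Φ Δ : Finset V}

lemma word_mem_span_iff {Δ' : Finset V} {l : List V} (hl : ∀ a ∈ l, a ∈ Δ') {x : V} :
    word l x ∈ Submodule.span ℝ (Δ' : Set V) ↔ x ∈ Submodule.span ℝ (Δ' : Set V) := by
  have hx := word_sub_self_mem_span hl x
  exact ⟨fun h => by simpa using sub_mem h hx, fun h => by simpa using add_mem hx h⟩

lemma IsRS.exists_simple_apply_mem_Pos (hR : IsRS Φ Δ) {Δ' : Finset V} (hsub : Δ' ⊆ Δ)
    (e : V ≃ₗᵢ[ℝ] V) (he : ∀ β ∈ Φ, e β ∈ Φ) {β : V} (hβ : β ∈ Pos Φ Δ')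
    (heβ : e β ∈ Pos Φ Δ) : ∃ α ∈ Δ', e α ∈ Pos Φ Δ := by
  by_contra! hno
  obtain ⟨hβΦ, hβhull⟩ := mem_Pos.mp hβ
  obtain ⟨c, hc0, rfl⟩ := mem_hull_finset.mp hβhull
  refine hR.neg_notMem_Pos heβ (mem_Pos.mpr ⟨hR.neg_mem _ (he _ hβΦ), ?_⟩)
  rw [map_sum, ← Finset.sum_neg_distrib]
  refine Submodule.sum_mem _ fun α hα => ?_
  rw [map_smul, ← smul_neg]
  have hneg := (hR.neg_mem_Pos_iff (he α (hR.simple_mem α (hsub hα)))).mpr (hno α hα)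
  exact PointedCone.smul_mem _ (hc0 α hα) (mem_Pos.mp hneg).2

lemma IsRS.exists_word_forall_notMem_Pos (hR : IsRS Φ Δ) {Δ' : Finset V} (hsub : Δ' ⊆ Δ) :
    ∃ l : List V, (∀ a ∈ l, a ∈ Δ') ∧ ∀ β ∈ Pos Φ Δ', word l β ∉ Pos Φ Δ := by
  -- Take a word over `Δ'` with the largest number of inversions.
  set S := {n | ∃ l : List V, (∀ a ∈ l, a ∈ Δ') ∧ (inversions Φ Δ (word l)).card = n}
  have hbdd : BddAbove S := ⟨(Pos Φ Δ).card, by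
    rintro _ ⟨l, -, rfl⟩
    exact Finset.card_le_card (inversions_subset Φ Δ _)⟩
  obtain ⟨l, hl, hmax⟩ := Nat.sSup_mem (s := S) ⟨_, [], by simp, rfl⟩ hbdd
  refine ⟨l, hl, fun β hβ hpos => ?_⟩
  have hlΔ : ∀ a ∈ l, a ∈ Δ := fun a ha => hsub (hl a ha)
  obtain ⟨α, hα, hαpos⟩ :=
    hR.exists_simple_apply_mem_Pos hsub (word l) (fun _ => hR.word_mem hlΔ) hβ hpos
  have hmem : (inversions Φ Δ (word l)).card + 1 ∈ S := by
    refine ⟨l ++ [α], by simpa [or_imp, forall_and] using ⟨hl, hα⟩, ?_⟩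
    rw [word_append, show word [α] = srefIso α by simp [word], coe_mul_srefIso,
      hR.card_inversions_comp_sref (hsub hα) _ hαpos]
  have := le_csSup hbdd hmem
  omega

lemma IsRS.inversions_subset_Pos_of_mem_Weyl (hR : IsRS Φ Δ) {Δ' : Finset V} (hsub : Δ' ⊆ Δ)
    {w : V → V} (hw : w ∈ Weyl Δ') : inversions Φ Δ w ⊆ Pos Φ Δ' := by
  obtain ⟨l, hl, rfl⟩ := mem_Weyl_iff.mp hw
  intro β hβ
  obtain ⟨hβpos, hβneg⟩ := mem_inversions.mp hβ
  refine (hR.mem_Pos_iff_of_subset hsub).mpr ⟨hβpos, ?_⟩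
  by_contra hspan
  exact hβneg (hR.word_mem_Pos_of_notMem_span hsub hl hβpos hspan)

/-- The longest element of the parabolic subgroup `W_{Δ'}`. -/
lemma IsRS.exists_word_inversions_eq (hR : IsRS Φ Δ) {Δ' : Finset V} (hsub : Δ' ⊆ Δ) :
    ∃ l : List V, (∀ a ∈ l, a ∈ Δ') ∧ inversions Φ Δ (word l) = Pos Φ Δ' := by
  obtain ⟨l, hl, hneg⟩ := hR.exists_word_forall_notMem_Pos hsub
  refine ⟨l, hl, (hR.inversions_subset_Pos_of_mem_Weyl hsub (word_mem_Weyl hl)).antisymm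
    fun β hβ => mem_inversions.mpr ⟨Pos_mono Φ hsub hβ, hneg β hβ⟩⟩

lemma IsRS.exists_inversions_eq_sdiff (hR : IsRS Φ Δ) {ΔP ΔQ : Finset V} (hQP : ΔQ ⊆ ΔP)
    (hP : ΔP ⊆ Δ) :
    ∃ u ∈ Weyl ΔP, (∀ β ∈ Pos Φ ΔQ, u β ∈ Pos Φ Δ) ∧
      inversions Φ Δ u = Pos Φ ΔP \ Pos Φ ΔQ := by
  have hQ : ΔQ ⊆ Δ := hQP.trans hP
  obtain ⟨lP, hlP, hinvP⟩ := hR.exists_word_inversions_eq hP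
  obtain ⟨lQ, hlQ, hinvQ⟩ := hR.exists_word_inversions_eq hQ
  have hlPΔ : ∀ a ∈ lP, a ∈ Δ := fun a ha => hP (hlP a ha)
  have hlQΔ : ∀ a ∈ lQ, a ∈ Δ := fun a ha => hQ (hlQ a ha)
  have hQneg : ∀ β ∈ Pos Φ Δ, (word lQ β ∈ Pos Φ Δ ↔ β ∉ Pos Φ ΔQ) := fun β hβ => by
    rw [apply_mem_Pos_iff_notMem_inversions hβ, hinvQ]
  have hPneg : ∀ β ∈ Pos Φ Δ, (word lP β ∈ Pos Φ Δ ↔ β ∉ Pos Φ ΔP) := fun β hβ => by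
    rw [apply_mem_Pos_iff_notMem_inversions hβ, hinvP]
  have hposQ : ∀ β ∈ Pos Φ ΔQ, word lP (word lQ β) ∈ Pos Φ Δ := fun β hβ => by
    have hβΔ := Pos_mono Φ hQ hβ
    have hβΦ := Pos_subset Φ Δ hβΔ
    have hQβ : -word lQ β ∈ Pos Φ Δ :=
      (hR.neg_mem_Pos_iff (hR.word_mem hlQΔ hβΦ)).mpr (by simpa [hQneg β hβΔ] using hβ)
    have hspan : -word lQ β ∈ Submodule.span ℝ (ΔQ : Set V) :=
      Submodule.neg_mem _ ((word_mem_span_iff hlQ).mpr ((hR.mem_Pos_iff_of_subset hQ).mp hβ).2)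
    have hQβP : -word lQ β ∈ Pos Φ ΔP := (hR.mem_Pos_iff_of_subset hP).mpr
      ⟨hQβ, Submodule.span_mono (Finset.coe_subset.mpr hQP) hspan⟩
    have := (hPneg _ hQβ).not.mpr (not_not.mpr hQβP)
    rwa [map_neg, hR.neg_mem_Pos_iff (hR.word_mem hlPΔ (hR.word_mem hlQΔ hβΦ)), not_not] at this
  -- The product `w_P w_Q` of the longest elements of `W_{ΔP}` and `W_{ΔQ}`.
  refine ⟨word lP ∘ word lQ, comp_mem_Weyl (word_mem_Weyl hlP)
    (Weyl_mono hQP (word_mem_Weyl hlQ)), hposQ, ?_⟩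
  ext β
  rw [mem_inversions, Finset.mem_sdiff, Function.comp_apply]
  by_cases hβQ : β ∈ Pos Φ ΔQ
  · exact ⟨fun h => absurd (hposQ β hβQ) h.2, fun h => absurd hβQ h.2⟩
  by_cases hβ : β ∈ Pos Φ Δ
  · have hQβ := (hQneg β hβ).mpr hβQ
    rw [hPneg _ hQβ, not_not, hR.mem_Pos_iff_of_subset hP, hR.mem_Pos_iff_of_subset hP,
      word_mem_span_iff fun a ha => hQP (hlQ a ha)]
    tauto
  · exact ⟨fun h => absurd h.1 hβ, fun h => absurd (Pos_mono Φ hP h.1) hβ⟩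

lemma IsRS.inversions_eq_sdiff_of_longest (hR : IsRS Φ Δ) {ΔP ΔQ : Finset V} (hQP : ΔQ ⊆ ΔP)
    (hP : ΔP ⊆ Δ) {w : V → V} (hw : w ∈ Weyl ΔP) (hwQ : ∀ β ∈ Pos Φ ΔQ, w β ∈ Pos Φ Δ)
    (hlongest : ∀ u ∈ Weyl ΔP, (∀ β ∈ Pos Φ ΔQ, u β ∈ Pos Φ Δ) → len Δ u ≤ len Δ w) :
    inversions Φ Δ w = Pos Φ ΔP \ Pos Φ ΔQ := by
  have hsub : inversions Φ Δ w ⊆ Pos Φ ΔP \ Pos Φ ΔQ := fun β hβ =>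
    Finset.mem_sdiff.mpr ⟨hR.inversions_subset_Pos_of_mem_Weyl hP hw hβ,
      fun hβQ => (mem_inversions.mp hβ).2 (hwQ β hβQ)⟩
  obtain ⟨u, hu, huQ, hinv⟩ := hR.exists_inversions_eq_sdiff hQP hP
  refine Finset.eq_of_subset_of_card_le hsub ?_
  rw [← hinv, ← hR.len_eq_card_inversions (Weyl_mono hP hu),
    ← hR.len_eq_card_inversions (Weyl_mono hP hw)]
  exact hlongest u hu huQ

end Parabolic

section Pairing

variable {Φ Δ : Finset V}

lemma cpr_two_smul_rho (Φ Δ : Finset V) (γ : V) :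
    cpr ((2 : ℝ) • rho Φ Δ) γ = ∑ β ∈ Pos Φ Δ, cpr β γ := by
  rw [rho, smul_smul, mul_inv_cancel₀ two_ne_zero, one_smul, cpr_sum]

lemma cpr_eq_zero_of_mem_Pos {Δ' : Finset V} {γ β : V} (h : ∀ α ∈ Δ', cpr α γ = 0)
    (hβ : β ∈ Pos Φ Δ') : cpr β γ = 0 := by
  obtain ⟨-, c, -, rfl⟩ := Finset.mem_filter.mp hβ
  rw [cpr_sum]
  exact Finset.sum_eq_zero fun α hα => by rw [cpr_smul, h α hα, mul_zero]

lemma cpr_nonpos_of_mem_Pos {Δ' : Finset V} {γ β : V} (h : ∀ α ∈ Δ', cpr α γ ≤ 0)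
    (hβ : β ∈ Pos Φ Δ') : cpr β γ ≤ 0 := by
  obtain ⟨-, c, hc0, rfl⟩ := Finset.mem_filter.mp hβ
  rw [cpr_sum]
  exact Finset.sum_nonpos fun α hα => by
    rw [cpr_smul]; exact mul_nonpos_of_nonneg_of_nonpos (hc0 α hα) (h α hα)

lemma mem_Pos_filter_of_cpr_eq_zero {Δ' : Finset V} {γ β : V} (h : ∀ α ∈ Δ', cpr α γ ≤ 0)
    (hβ : β ∈ Pos Φ Δ') (hβγ : cpr β γ = 0) :
    β ∈ Pos Φ (Δ'.filter fun α => cpr α γ = 0) := by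
  obtain ⟨hβΦ, c, hc0, rfl⟩ := Finset.mem_filter.mp hβ
  have hterm : ∀ α ∈ Δ', c α * cpr α γ = 0 := by
    rw [cpr_sum] at hβγ
    simp only [cpr_smul] at hβγ
    exact (Finset.sum_eq_zero_iff_of_nonpos fun α hα =>
      mul_nonpos_of_nonneg_of_nonpos (hc0 α hα) (h α hα)).mp hβγ
  refine Finset.mem_filter.mpr ⟨hβΦ, c, fun α hα => hc0 α (Finset.filter_subset _ _ hα), ?_⟩
  refine (Finset.sum_filter_of_ne fun α hα hne => ?_).symm
  rcases mul_eq_zero.mp (hterm α hα) with h0 | h0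
  · exact absurd (by rw [h0, zero_smul]) hne
  · exact h0

lemma cpr_two_smul_rho_eq_neg_card {ΔP ΔQ : Finset V} {γ : V} (hQP : ΔQ ⊆ ΔP)
    (hQ : ∀ α ∈ ΔQ, cpr α γ = 0) (hPQ : ∀ β ∈ Pos Φ ΔP \ Pos Φ ΔQ, cpr β γ = -1) :
    cpr ((2 : ℝ) • rho Φ ΔP) γ = -(Pos Φ ΔP \ Pos Φ ΔQ).card := by
  rw [cpr_two_smul_rho, ← Finset.sum_sdiff (Pos_mono Φ hQP), Finset.sum_congr rfl hPQ,
    Finset.sum_eq_zero fun β hβ => cpr_eq_zero_of_mem_Pos hQ hβ]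
  simp

lemma IsRS.cpr_le_one (hR : IsRS Φ Δ) {δ γ : V} (hδ : δ ∈ Φ) (hγ : γ ∈ Φ)
    (hlen : ⟪δ, δ⟫ ≤ ⟪γ, γ⟫) (hne : δ ≠ γ) : cpr δ γ ≤ 1 := by
  by_contra! hgt
  obtain ⟨k, hk⟩ := hR.cryst δ hδ γ hγ
  have hk2 : (2 : ℝ) ≤ cpr δ γ := by
    rw [← hk] at hgt ⊢
    exact_mod_cast (show (1 : ℤ) < k by exact_mod_cast hgt)
  have hγγ : 0 < ⟪γ, γ⟫ := real_inner_self_pos.mpr (hR.ne_zero hγ)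
  have hδγ : ⟪γ, γ⟫ ≤ ⟪δ, γ⟫ := by
    rw [cpr, le_div_iff₀ hγγ] at hk2; linarith
  have : ⟪δ - γ, δ - γ⟫ ≤ 0 := by
    rw [inner_sub_sub_self, real_inner_comm δ γ]; linarith
  exact hne (sub_eq_zero.mp (real_inner_self_nonpos.mp this))

lemma IsRS.neg_one_le_cpr (hR : IsRS Φ Δ) {δ γ : V} (hδ : δ ∈ Φ) (hγ : γ ∈ Φ)
    (hlen : ⟪δ, δ⟫ ≤ ⟪γ, γ⟫) (hne : δ ≠ -γ) : -1 ≤ cpr δ γ := by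
  have := hR.cpr_le_one (hR.neg_mem δ hδ) hγ (by simpa using hlen)
    fun h => hne (by rw [← neg_neg δ, h])
  rw [cpr_neg] at this
  linarith

lemma IsRS.cpr_eq_neg_one_of_mem_sdiff (hR : IsRS Φ Δ) {Δ' : Finset V} {γ β : V}
    (hsub : Δ' ⊆ Δ) (hγ : γ ∈ Pos Φ Δ) (hlong : ∀ δ ∈ Φ, ⟪δ, δ⟫ ≤ ⟪γ, γ⟫)
    (hobtuse : ∀ α ∈ Δ', cpr α γ ≤ 0)
    (hβ : β ∈ Pos Φ Δ' \ Pos Φ (Δ'.filter fun α => cpr α γ = 0)) : cpr β γ = -1 := by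
  obtain ⟨hβP, hβQ⟩ := Finset.mem_sdiff.mp hβ
  have hβΦ := Pos_subset Φ Δ' hβP
  have hγΦ := Pos_subset Φ Δ hγ
  have hne : β ≠ -γ := fun h =>
    hR.neg_notMem_Pos (Pos_mono Φ hsub hβP) (by rwa [h, neg_neg])
  have hle := cpr_nonpos_of_mem_Pos hobtuse hβP
  have hge := hR.neg_one_le_cpr hβΦ hγΦ (hlong β hβΦ) hne
  have hne0 : cpr β γ ≠ 0 := fun h0 => hβQ (mem_Pos_filter_of_cpr_eq_zero hobtuse hβP h0)
  obtain ⟨k, hk⟩ := hR.cryst β hβΦ γ hγΦ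
  rw [← hk] at hle hge hne0 ⊢
  have : k = -1 := by
    have : k ≤ 0 := by exact_mod_cast hle
    have : -1 ≤ k := by exact_mod_cast hge
    have : k ≠ 0 := by exact_mod_cast hne0
    omega
  rw [this]; norm_num

end Pairing

section Quantum

variable {Φ Δ : Finset V}

lemma IsRS.one_le_cpr_of_mem_inversions_sref (hR : IsRS Φ Δ) {γ β : V} (hγ : γ ∈ Pos Φ Δ)
    (hβ : β ∈ inversions Φ Δ (sref γ)) : 1 ≤ cpr β γ := by
  obtain ⟨hβpos, hβneg⟩ := mem_inversions.mp hβ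
  have hβΦ := Pos_subset Φ Δ hβpos
  have hγΦ := Pos_subset Φ Δ hγ
  have hpos : 0 < cpr β γ := by
    by_contra! hle
    refine hβneg (mem_Pos.mpr ⟨hR.refl_mem γ hγΦ β hβΦ, ?_⟩)
    rw [sref_apply, sub_eq_add_neg, ← neg_smul]
    exact add_mem (mem_Pos.mp hβpos).2
      (PointedCone.smul_mem _ (neg_nonneg.mpr hle) (mem_Pos.mp hγ).2)
  obtain ⟨k, hk⟩ := hR.cryst β hβΦ γ hγΦ
  rw [← hk] at hpos ⊢
  exact_mod_cast (show (0 : ℤ) < k by exact_mod_cast hpos)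

/-- `s_γ` pairs off the positive roots it keeps positive, with opposite pairings. -/
lemma sum_cpr_filter_sref_mem_Pos {γ : V} (hγ : γ ≠ 0) :
    ∑ β ∈ (Pos Φ Δ).filter (fun β => sref γ β ∈ Pos Φ Δ), cpr β γ = 0 := by
  refine Finset.sum_involution (fun β _ => sref γ β) (fun β _ => ?_) (fun β _ hne hfix => ?_)
    (fun β hβ => ?_) (fun β _ => sref_sref γ β)
  · rw [sref_apply, cpr_sub, cpr_smul, cpr_self hγ]; ring
  · refine hne ?_
    have : cpr β γ • γ = 0 := by rw [sref_apply, sub_eq_self] at hfix; exact hfix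
    exact (smul_eq_zero.mp this).resolve_right hγ
  · simp only [Finset.mem_filter] at hβ ⊢
    exact ⟨hβ.2, by rw [sref_sref]; exact hβ.1⟩

lemma IsRS.sum_cpr_eq_card_inversions_add_one (hR : IsRS Φ Δ) {γ : V} (hγ : γ ∈ Pos Φ Δ)
    (hlong : ∀ δ ∈ Φ, ⟪δ, δ⟫ ≤ ⟪γ, γ⟫) :
    ∑ β ∈ Pos Φ Δ, cpr β γ = (inversions Φ Δ (sref γ)).card + 1 := by
  have hγΦ := Pos_subset Φ Δ hγ
  have hγ0 := hR.ne_zero hγΦ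
  have hγinv : γ ∈ inversions Φ Δ (sref γ) :=
    mem_inversions.mpr ⟨hγ, by rw [sref_self]; exact hR.neg_notMem_Pos hγ⟩
  have hone : ∀ β ∈ (inversions Φ Δ (sref γ)).erase γ, cpr β γ = 1 := fun β hβ => by
    have hβinv := Finset.mem_of_mem_erase hβ
    have hβΦ := Pos_subset Φ Δ (mem_inversions.mp hβinv).1
    exact le_antisymm (hR.cpr_le_one hβΦ hγΦ (hlong β hβΦ) (Finset.ne_of_mem_erase hβ))
      (hR.one_le_cpr_of_mem_inversions_sref hγ hβinv)
  rw [← Finset.sum_filter_add_sum_filter_not (Pos Φ Δ) (fun β => sref γ β ∈ Pos Φ Δ),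
    sum_cpr_filter_sref_mem_Pos hγ0, zero_add]
  change ∑ β ∈ inversions Φ Δ (sref γ), cpr β γ = _
  rw [← Finset.sum_erase_add _ _ hγinv, Finset.sum_congr rfl hone, Finset.sum_const,
    nsmul_eq_mul, mul_one, cpr_self hγ0, Finset.card_erase_of_mem hγinv,
    Nat.cast_sub (Finset.card_pos.mpr ⟨γ, hγinv⟩)]
  push_cast
  ring

lemma IsRS.sum_sref_erase_Pos (hR : IsRS Φ Δ) {α : V} (hα : α ∈ Δ) :
    ∑ β ∈ (Pos Φ Δ).erase α, sref α β = ∑ β ∈ (Pos Φ Δ).erase α, β := by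
  have hmaps : ∀ β ∈ (Pos Φ Δ).erase α, sref α β ∈ (Pos Φ Δ).erase α := fun β hβ => by
    obtain ⟨hβα, hβ⟩ := Finset.mem_erase.mp hβ
    refine Finset.mem_erase.mpr ⟨fun h => ?_, hR.sref_mem_Pos hα hβ hβα⟩
    have : β = -α := by rw [← sref_sref α β, h, sref_self]
    exact hR.neg_notMem_Pos (hR.simple_mem_Pos hα) (this ▸ hβ)
  exact Finset.sum_nbij' (sref α) (sref α) hmaps hmaps (fun β _ => sref_sref α β)
    (fun β _ => sref_sref α β) fun β _ => rfl

lemma IsRS.cpr_rho_simple (hR : IsRS Φ Δ) {α : V} (hα : α ∈ Δ) : cpr (rho Φ Δ) α = 1 := by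
  have hα0 := hR.ne_zero (hR.simple_mem α hα)
  have hsum : sref α (∑ β ∈ Pos Φ Δ, β) = ∑ β ∈ Pos Φ Δ, β - (2 : ℝ) • α := by
    rw [← Finset.insert_erase (hR.simple_mem_Pos hα), Finset.sum_insert (Finset.notMem_erase α _),
      ← coe_srefIso, map_add, map_sum, coe_srefIso, sref_self, hR.sum_sref_erase_Pos hα]
    module
  have : cpr (∑ β ∈ Pos Φ Δ, β) α = 2 := by
    rw [sref_apply, sub_right_inj] at hsum
    exact smul_left_injective ℝ hα0 hsum
  rw [rho, cpr_smul, this]; norm_num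

lemma IsRS.exists_simple_inner_pos (hR : IsRS Φ Δ) {β : V} (hβ : β ∈ Pos Φ Δ) :
    ∃ α ∈ Δ, 0 < ⟪β, α⟫ := by
  obtain ⟨hβΦ, c, hc0, hc⟩ := Finset.mem_filter.mp hβ
  by_contra! hno
  have : ⟪β, β⟫ ≤ 0 := by
    nth_rewrite 2 [hc]
    rw [inner_sum]
    exact Finset.sum_nonpos fun α hα => by
      rw [real_inner_smul_right]; exact mul_nonpos_of_nonneg_of_nonpos (hc0 α hα) (hno α hα)
  exact hR.ne_zero hβΦ (real_inner_self_nonpos.mp this)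

lemma sref_sref_eq_comp (α β : V) : sref (sref α β) = sref α ∘ sref β ∘ sref α := by
  funext x
  have := congrFun (congrArg DFunLike.coe (srefIso_conj (srefIso α) β)) (sref α x)
  simp only [LinearIsometryEquiv.coe_mul, Function.comp_apply, coe_srefIso, sref_sref] at this
  simp [this]

lemma IsRS.sref_mem_Weyl (hR : IsRS Φ Δ) {β : V} (hβ : β ∈ Pos Φ Δ) : sref β ∈ Weyl Δ := by
  by_contra hβW
  -- A counterexample `β₀` of least height `⟪β₀, ρ⟫` leads to one of smaller height.
  obtain ⟨β₀, hβ₀, hmin⟩ := Finset.exists_min_image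
    ((Pos Φ Δ).filter fun β => sref β ∉ Weyl Δ) (fun β => ⟪β, rho Φ Δ⟫)
    ⟨β, Finset.mem_filter.mpr ⟨hβ, hβW⟩⟩
  obtain ⟨hβ₀pos, hβ₀W⟩ := Finset.mem_filter.mp hβ₀
  obtain ⟨α, hα, hβ₀α⟩ := hR.exists_simple_inner_pos hβ₀pos
  have hne : β₀ ≠ α := fun h => hβ₀W (h ▸ sref_mem_Weyl_of_mem hα)
  have hlower : ⟪sref α β₀, rho Φ Δ⟫ < ⟪β₀, rho Φ Δ⟫ := by
    have hαα : 0 < ⟪α, α⟫ := real_inner_self_pos.mpr (hR.ne_zero (hR.simple_mem α hα))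
    have hcpr : 0 < cpr β₀ α := div_pos (by linarith) hαα
    have hρ : 0 < ⟪α, rho Φ Δ⟫ := by
      have h1 := hR.cpr_rho_simple hα
      rw [cpr, div_eq_one_iff_eq hαα.ne', real_inner_comm] at h1
      linarith
    rw [sref_apply, inner_sub_left, real_inner_smul_left]
    nlinarith
  have hW : sref (sref α β₀) ∈ Weyl Δ := by
    by_contra h
    exact absurd (hmin _ (Finset.mem_filter.mpr ⟨hR.sref_mem_Pos hα hβ₀pos hne, h⟩)) hlower.not_ge
  refine hβ₀W ?_
  rw [← sref_sref α β₀, sref_sref_eq_comp]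
  exact comp_mem_Weyl (sref_mem_Weyl_of_mem hα)
    (comp_mem_Weyl hW (sref_mem_Weyl_of_mem hα))

lemma IsRS.isQuantum (hR : IsRS Φ Δ) {γ : V} (hγ : γ ∈ Pos Φ Δ)
    (hlong : ∀ δ ∈ Φ, ⟪δ, δ⟫ ≤ ⟪γ, γ⟫) : IsQuantum Φ Δ γ := by
  rw [IsQuantum, hR.len_eq_card_inversions (hR.sref_mem_Weyl hγ), cpr_two_smul_rho,
    hR.sum_cpr_eq_card_inversions_add_one hγ hlong]
  ring

end Quantum

section Composition

variable {Φ Δ : Finset V}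

lemma IsRS.inversions_comp_sref_of_cpr_lt_one (hR : IsRS Φ Δ) {γ : V} (hγ : γ ∈ Pos Φ Δ)
    (e : V ≃ₗᵢ[ℝ] V) (he : ∀ β ∈ inversions Φ Δ e, cpr β γ < 1) :
    inversions Φ Δ (e ∘ sref γ) =
      inversions Φ Δ (sref γ) ∪ (inversions Φ Δ e).image (sref γ) := by
  have hγΦ := Pos_subset Φ Δ hγ
  ext β
  simp only [Finset.mem_union, Finset.mem_image, mem_inversions, Function.comp_apply]
  constructor
  · rintro ⟨hβ, hneg⟩
    by_cases hsβ : sref γ β ∈ Pos Φ Δ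
    · exact Or.inr ⟨sref γ β, ⟨hsβ, hneg⟩, sref_sref γ β⟩
    · exact Or.inl ⟨hβ, hsβ⟩
  · rintro (⟨hβ, hsβ⟩ | ⟨β', ⟨hβ', hneg⟩, rfl⟩)
    · -- `-s_γ β` is an inversion of `s_γ`, so it pairs to at least `1` and is no inversion of `e`.
      have hsβΦ := hR.refl_mem γ hγΦ β (Pos_subset Φ Δ hβ)
      have hδ : -sref γ β ∈ Pos Φ Δ := (hR.neg_mem_Pos_iff hsβΦ).mpr hsβ
      have hδinv : -sref γ β ∈ inversions Φ Δ (sref γ) :=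
        mem_inversions.mpr ⟨hδ, by rw [sref_neg, sref_sref]; exact hR.neg_notMem_Pos hβ⟩
      have heδ : e (-sref γ β) ∈ Pos Φ Δ := by
        by_contra h
        exact absurd (he _ (mem_inversions.mpr ⟨hδ, h⟩))
          (hR.one_le_cpr_of_mem_inversions_sref hγ hδinv).not_gt
      refine ⟨hβ, fun h => hR.neg_notMem_Pos h ?_⟩
      rwa [← map_neg]
    · have hsβ' : sref γ β' ∈ Pos Φ Δ := by
        by_contra h
        exact absurd (he β' (mem_inversions.mpr ⟨hβ', hneg⟩))
          (hR.one_le_cpr_of_mem_inversions_sref hγ (mem_inversions.mpr ⟨hβ', h⟩)).not_gt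
      exact ⟨hsβ', by rwa [sref_sref]⟩

lemma IsRS.len_comp_sref_eq_add (hR : IsRS Φ Δ) {γ : V} (hγ : γ ∈ Pos Φ Δ) {w : V → V}
    (hw : w ∈ Weyl Δ) (hinv : ∀ β ∈ inversions Φ Δ w, cpr β γ < 1) :
    len Δ (w ∘ sref γ) = len Δ w + len Δ (sref γ) := by
  obtain ⟨l, -, rfl⟩ := mem_Weyl_iff.mp hw
  have hsγ := hR.sref_mem_Weyl hγ
  have hdisj : Disjoint (inversions Φ Δ (sref γ)) ((inversions Φ Δ (word l)).image (sref γ)) :=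
    Finset.disjoint_left.mpr fun β hβ himg => by
      obtain ⟨β', hβ', rfl⟩ := Finset.mem_image.mp himg
      exact (mem_inversions.mp hβ).2 (by rw [sref_sref]; exact (mem_inversions.mp hβ').1)
  rw [hR.len_eq_card_inversions (comp_mem_Weyl hw hsγ), hR.len_eq_card_inversions hw,
    hR.len_eq_card_inversions hsγ, hR.inversions_comp_sref_of_cpr_lt_one hγ _ hinv,
    Finset.card_union_of_disjoint hdisj,
    Finset.card_image_of_injective _ (sref_involutive γ).injective, add_comm]

end Composition

section DistinguishedRoot

variable {Φ Δ : Finset V}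

structure IsLongObtuseRoot (Φ Δ : Finset V) (ι γ : V) : Prop where
  mem_Pos : γ ∈ Pos Φ Δ
  inner_self_le : ∀ δ ∈ Φ, ⟪δ, δ⟫ ≤ ⟪γ, γ⟫
  cpr_nonpos : ∀ α ∈ Δ.erase ι, cpr α γ ≤ 0

lemma IsRS.inner_simple_nonpos (hR : IsRS Φ Δ) {α β : V} (hα : α ∈ Δ) (hβ : β ∈ Δ)
    (hne : α ≠ β) : ⟪α, β⟫ ≤ 0 := by
  by_contra! hpos
  have hk : 0 < cpr α β :=
    div_pos (by linarith) (real_inner_self_pos.mpr (hR.ne_zero (hR.simple_mem β hβ)))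
  -- `s_β α = α - ⟨α, β^∨⟩ β` has coefficients of both signs.
  have hsum : ∀ s : ℝ, s • sref β α =
      ∑ v ∈ Δ, (s * (if v = α then 1 else 0) - s * (if v = β then cpr α β else 0)) • v := by
    intro s
    simp only [sub_smul, mul_smul, ite_smul, one_smul, zero_smul,
      Finset.sum_sub_distrib, ← Finset.smul_sum, Finset.sum_ite_eq', if_pos hα, if_pos hβ,
      sref_apply, smul_sub]
  rcases hR.pos_or_neg _ (hR.refl_mem β (hR.simple_mem β hβ) α (hR.simple_mem α hα)) with h | h
  · obtain ⟨-, c, hc0, hc⟩ := Finset.mem_filter.mp h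
    have := hR.coeff_eq_of_sum_eq (hc.symm.trans ((one_smul ℝ _).symm.trans (hsum 1))) β hβ
    rw [if_neg hne.symm, if_pos rfl] at this
    linarith [hc0 β hβ]
  · obtain ⟨-, c, hc0, hc⟩ := Finset.mem_filter.mp h
    have := hR.coeff_eq_of_sum_eq (hc.symm.trans ((neg_one_smul ℝ _).symm.trans (hsum (-1)))) α hα
    rw [if_pos rfl, if_neg hne] at this
    linarith [hc0 α hα]

lemma IsRS.mem_Pos_of_inner_pos (hR : IsRS Φ Δ) {γ ξ : V} (hγ : γ ∈ Φ)
    (hξ : ∀ α ∈ Δ, 0 ≤ ⟪α, ξ⟫) (hγξ : 0 < ⟪γ, ξ⟫) : γ ∈ Pos Φ Δ := by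
  refine (hR.pos_or_neg γ hγ).resolve_right fun hneg => ?_
  obtain ⟨-, c, hc0, hc⟩ := Finset.mem_filter.mp hneg
  have : 0 ≤ ⟪-γ, ξ⟫ := by
    rw [hc, sum_inner]
    exact Finset.sum_nonneg fun α hα => by
      rw [real_inner_smul_left]; exact mul_nonneg (hc0 α hα) (hξ α hα)
  rw [inner_neg_left] at this
  linarith

lemma IsRS.isLongObtuseRoot_of_simplyLaced (hR : IsRS Φ Δ) {ι : V} (hι : ι ∈ Δ)
    (hsl : SimplyLaced Φ) : IsLongObtuseRoot Φ Δ ι ι where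
  mem_Pos := hR.simple_mem_Pos hι
  inner_self_le δ hδ := (hsl δ hδ ι (hR.simple_mem ι hι)).le
  cpr_nonpos _ hα := cpr_le_zero_of_inner_nonpos <|
    hR.inner_simple_nonpos (Finset.mem_of_mem_erase hα) hι (Finset.ne_of_mem_erase hα)

lemma inner_self_eq_two_of_orthonormal {n : ℕ} {e : Fin n → V} (he : Orthonormal ℝ e)
    {i j : Fin n} (hij : i ≠ j) {δ : V}
    (hδ : δ = e i - e j ∨ δ = e i + e j ∨ δ = -(e i + e j)) : ⟪δ, δ⟫ = 2 := by
  have hval := orthonormal_iff_ite.mp he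
  rcases hδ with rfl | rfl | rfl <;>
    simp only [inner_add_left, inner_add_right, inner_sub_left, inner_sub_right,
      inner_neg_left, inner_neg_right, hval, if_neg hij, if_neg (Ne.symm hij)] <;>
    norm_num

lemma isLongObtuseRoot_of_typeB {n : ℕ} (hn : 2 ≤ n) {e : Fin n → V}
    (hB : TypeBData Φ Δ n e) :
    IsLongObtuseRoot Φ Δ (e ⟨n - 1, by omega⟩)
      (e ⟨n - 2, by omega⟩ + e ⟨n - 1, by omega⟩) := by
  obtain ⟨he, hΦ, hΔ⟩ := hB
  have hval := orthonormal_iff_ite.mp he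
  set p : Fin n := ⟨n - 2, by omega⟩
  set q : Fin n := ⟨n - 1, by omega⟩
  have hpq : p ≠ q := by simp only [p, q, ne_eq, Fin.mk.injEq]; omega
  have hγγ : ⟪e p + e q, e p + e q⟫ = 2 :=
    inner_self_eq_two_of_orthonormal he hpq (Or.inr (Or.inl rfl))
  refine ⟨mem_Pos.mpr ⟨?_, ?_⟩, fun δ hδ => ?_, fun α hα => ?_⟩
  · rw [← Finset.mem_coe, hΦ]
    exact Or.inl ⟨p, q, hpq, Or.inr (Or.inl rfl)⟩
  · -- `γ = α_{n-2} + 2 α_{n-1}`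
    have hp1 : (p : ℕ) + 1 < n := by simp only [p]; omega
    have hsimple₁ : e p - e q ∈ (Δ : Set V) := by
      rw [hΔ]
      exact Or.inl ⟨p, hp1, by congr 2; exact Fin.ext (by simp only [p, q]; omega)⟩
    have hsimple₂ : e q ∈ (Δ : Set V) := by
      rw [hΔ]
      exact Or.inr ⟨by omega, rfl⟩
    rw [show e p + e q = (e p - e q) + (2 : ℝ) • e q by module]
    exact add_mem (PointedCone.subset_hull hsimple₁)
      (PointedCone.smul_mem _ zero_le_two (PointedCone.subset_hull hsimple₂))
  · rw [hγγ]
    have hδ' : δ ∈ (Φ : Set V) := hδ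
    rw [hΦ] at hδ'
    rcases hδ' with ⟨i, j, hij, hδ⟩ | ⟨i, rfl | rfl⟩
    · exact (inner_self_eq_two_of_orthonormal he hij hδ).le
    all_goals simp only [inner_neg_left, inner_neg_right, hval]; norm_num
  · have hαι := Finset.ne_of_mem_erase hα
    have hα' : α ∈ (Δ : Set V) := Finset.mem_of_mem_erase hα
    rw [hΔ] at hα'
    rcases hα' with ⟨i, hi, rfl⟩ | ⟨_, hαq⟩
    · refine cpr_le_zero_of_inner_nonpos ?_
      simp only [inner_add_right, inner_sub_left, hval, p, q, Fin.ext_iff]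
      split_ifs <;> first | omega | contradiction | norm_num
    · exact absurd hαq hαι

lemma IsRS.isLongObtuseRoot_of_typeC (hR : IsRS Φ Δ) {n : ℕ} (hn : 2 ≤ n) {e : Fin n → V}
    (hC : TypeCData Φ Δ n e) :
    IsLongObtuseRoot Φ Δ (e ⟨0, by omega⟩ - e ⟨1, by omega⟩) ((2 : ℝ) • e ⟨0, by omega⟩) := by
  obtain ⟨he, hΦ, hΔ⟩ := hC
  have hval := orthonormal_iff_ite.mp he
  set p : Fin n := ⟨0, by omega⟩
  have hγγ : ⟪(2 : ℝ) • e p, (2 : ℝ) • e p⟫ = 4 := by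
    rw [real_inner_smul_left, real_inner_smul_right, hval, if_pos rfl]; norm_num
  refine ⟨mem_Pos.mpr ⟨?_, ?_⟩, fun δ hδ => ?_, fun α hα => ?_⟩
  · rw [← Finset.mem_coe, hΦ]
    exact Or.inr ⟨p, Or.inl rfl⟩
  · refine (mem_Pos.mp (hR.mem_Pos_of_inner_pos (ξ := e p) ?_ (fun α hα => ?_) ?_)).2
    · rw [← Finset.mem_coe, hΦ]
      exact Or.inr ⟨p, Or.inl rfl⟩
    · have hα' : α ∈ (Δ : Set V) := hα
      rw [hΔ] at hα'
      rcases hα' with ⟨i, hi, rfl⟩ | ⟨_, rfl⟩ <;>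
        simp only [inner_sub_left, real_inner_smul_left, hval, p, Fin.ext_iff] <;>
        split_ifs <;> first | omega | contradiction | norm_num
    · rw [real_inner_smul_left, hval, if_pos rfl]; norm_num
  · rw [hγγ]
    have hδ' : δ ∈ (Φ : Set V) := hδ
    rw [hΦ] at hδ'
    rcases hδ' with ⟨i, j, hij, hδ⟩ | ⟨i, rfl | rfl⟩
    · linarith [inner_self_eq_two_of_orthonormal he hij hδ]
    all_goals
      simp only [inner_neg_left, inner_neg_right, real_inner_smul_left, real_inner_smul_right,
        hval]
      norm_num
  · have hα' : α ∈ (Δ : Set V) := Finset.mem_of_mem_erase hα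
    rw [hΔ] at hα'
    rcases hα' with ⟨i, hi, rfl⟩ | ⟨_, rfl⟩
    · refine cpr_le_zero_of_inner_nonpos ?_
      have hi0 : (i : ℕ) ≠ 0 := fun h0 => Finset.ne_of_mem_erase hα <| by
        congr 2 <;> exact Fin.ext (by simp [p, h0])
      simp only [real_inner_smul_right, inner_sub_left, hval, p, Fin.ext_iff]
      split_ifs <;> first | omega | contradiction | norm_num
    · refine cpr_le_zero_of_inner_nonpos ?_
      simp only [real_inner_smul_right, real_inner_smul_left, hval, p, Fin.ext_iff]
      split_ifs <;> first | omega | contradiction | norm_num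

lemma IsRS.isLongObtuseRoot (hR : IsRS Φ Δ) {ι γ : V} (hι : ι ∈ Δ)
    (hγ : DistinguishedGamma Φ Δ ι γ) : IsLongObtuseRoot Φ Δ ι γ := by
  rcases hγ with ⟨hsl, rfl⟩ | ⟨n, hn, e, hB, rfl, rfl⟩ | ⟨n, hn, e, hC, rfl, rfl⟩
  · exact hR.isLongObtuseRoot_of_simplyLaced hι hsl
  · exact isLongObtuseRoot_of_typeB hn hB
  · exact hR.isLongObtuseRoot_of_typeC hn hC

end DistinguishedRoot

end Pp

open Pp in
theorem stmt9_general {V : Type*} [NormedAddCommGroup V] [InnerProductSpace ℝ V]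
    (Φ Δ : Finset V) (hRS : IsRS Φ Δ) (ι : V) (hι : ι ∈ Δ)
    (γ : V) (hγ : DistinguishedGamma Φ Δ ι γ)
    (wPQ : V → V)
    (hwPQ : wPQ ∈ Weyl (Δ.erase ι))
    (hminQ : ∀ β ∈ Pos Φ ((Δ.erase ι).filter fun j => cpr j γ = 0),
        wPQ β ∈ Pos Φ Δ)
    (hlongest : ∀ u ∈ Weyl (Δ.erase ι),
        (∀ β ∈ Pos Φ ((Δ.erase ι).filter fun j => cpr j γ = 0), u β ∈ Pos Φ Δ) →
        len Δ u ≤ len Δ wPQ) :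
    (∀ β ∈ Pos Φ Δ, (-(wPQ β) ∈ Pos Φ Δ ↔
        (β ∈ Pos Φ (Δ.erase ι) ∧
         β ∉ Pos Φ ((Δ.erase ι).filter fun j => cpr j γ = 0)))) ∧
    ((len Δ wPQ : ℝ) = cpr (-((2:ℝ) • rho Φ (Δ.erase ι))) γ) ∧
    (len Δ (wPQ ∘ sref γ) = len Δ wPQ + len Δ (sref γ) ∧
     (len Δ (wPQ ∘ sref γ) : ℝ) =
        cpr ((2:ℝ) • (rho Φ Δ - rho Φ (Δ.erase ι))) γ - 1) := by
  set ΔP := Δ.erase ι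
  set ΔQ := ΔP.filter fun j => cpr j γ = 0
  have hP : ΔP ⊆ Δ := Finset.erase_subset ι Δ
  have hQP : ΔQ ⊆ ΔP := Finset.filter_subset _ _
  obtain ⟨hγpos, hlong, hobtuse⟩ := hRS.isLongObtuseRoot hι hγ
  have hw := Weyl_mono hP hwPQ
  have hinv := hRS.inversions_eq_sdiff_of_longest hQP hP hwPQ hminQ hlongest
  have hcpr : ∀ β ∈ Pos Φ ΔP \ Pos Φ ΔQ, cpr β γ = -1 :=
    fun β hβ => hRS.cpr_eq_neg_one_of_mem_sdiff hP hγpos hlong hobtuse hβ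
  have hlen : (len Δ wPQ : ℝ) = -cpr ((2 : ℝ) • rho Φ ΔP) γ := by
    rw [cpr_two_smul_rho_eq_neg_card hQP (fun α hα => (Finset.mem_filter.mp hα).2) hcpr,
      hRS.len_eq_card_inversions hw, hinv, neg_neg]
  have hlen_comp := hRS.len_comp_sref_eq_add hγpos hw fun β hβ => by
    rw [hcpr β (hinv ▸ hβ)]; norm_num
  have hquantum : (len Δ (sref γ) : ℝ) = cpr ((2 : ℝ) • rho Φ Δ) γ - 1 :=
    hRS.isQuantum hγpos hlong
  refine ⟨fun β hβ => ?_, by rw [cpr_neg, hlen], hlen_comp, ?_⟩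
  · rw [hRS.neg_apply_mem_Pos_iff hw hβ, hinv, Finset.mem_sdiff]
  · rw [hlen_comp, Nat.cast_add, hlen, hquantum, smul_sub, cpr_sub]
    ring

open Pp in
/-- Lemma 9: for `w_{P/Q}`, the longest element of `W_P` that is a minimal
length representative of its coset `w_{P/Q} W_Q`:
(1) `Inv(w_{P/Q}) = R_P^+ \ R_Q^+`;
(2) `ℓ(w_{P/Q}) = ⟨-2ρ_P, γ^∨⟩`;
(3) `ℓ(w_{P/Q} s_γ) = ℓ(w_{P/Q}) + ℓ(s_γ) = ⟨2(ρ - ρ_P), γ^∨⟩ - 1`. -/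
theorem stmt9 {V : Type*} [NormedAddCommGroup V] [InnerProductSpace ℝ V]
    (Φ Δ : Finset V) (hRS : IsRS Φ Δ) (ι : V) (hι : ι ∈ Δ)
    (hmin : Minuscule Φ Δ ι)
    (γ : V) (hγ : DistinguishedGamma Φ Δ ι γ)
    (wPQ : V → V)
    (hwPQ : wPQ ∈ Weyl (Δ.erase ι))
    (hminQ : ∀ β ∈ Pos Φ ((Δ.erase ι).filter fun j => cpr j γ = 0),
        wPQ β ∈ Pos Φ Δ)
    (hlongest : ∀ u ∈ Weyl (Δ.erase ι),
        (∀ β ∈ Pos Φ ((Δ.erase ι).filter fun j => cpr j γ = 0), u β ∈ Pos Φ Δ) →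
        len Δ u ≤ len Δ wPQ) :
    (∀ β ∈ Pos Φ Δ, (-(wPQ β) ∈ Pos Φ Δ ↔
        (β ∈ Pos Φ (Δ.erase ι) ∧
         β ∉ Pos Φ ((Δ.erase ι).filter fun j => cpr j γ = 0)))) ∧
    ((len Δ wPQ : ℝ) = cpr (-((2:ℝ) • rho Φ (Δ.erase ι))) γ) ∧
    (len Δ (wPQ ∘ sref γ) = len Δ wPQ + len Δ (sref γ) ∧
     (len Δ (wPQ ∘ sref γ) : ℝ) =
        cpr ((2:ℝ) • (rho Φ Δ - rho Φ (Δ.erase ι))) γ - 1) :=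
  stmt9_general Φ Δ hRS ι hι γ hγ wPQ hwPQ hminQ hlongest
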